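/- Let Q be the standard positive definite form on Rⁿ and Cl(n) the Clifford algebra with eᵢ² = -1. Then on the subspace H spanned by the e_I with |I| ≡ 1, 2 (mod 4) and e_I ≠ ω, the Killing form B is negative definite and the canonical bilinear form Q̄ is positive definite (indeed e_I² = -1 and Q̄(e_I,e_I) = 1 for all such e_I). -/

import Mathlib

open CliffordAlgebra

section Defs

variable {F V : Type*} [Field F] [AddCommGroup V] [Module F V]

/-- The monomial `e_I` associated to a multi-index `I`, realized as a finite set of
indices multiplied in increasing order (with `e_∅ = 1`). -/
noncomputable def eI (Qf : QuadraticForm F V) {n : ℕ} (b : Module.Basis (Fin n) F V)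
    (s : Finset (Fin n)) : CliffordAlgebra Qf :=
  ((s.sort (· ≤ ·)).map fun i => ι Qf (b i)).prod

/-- The conjugation anti-automorphism `c = α ∘ τ` of the Clifford algebra. -/
noncomputable def cconj (Qf : QuadraticForm F V) :
    CliffordAlgebra Qf →ₗ[F] CliffordAlgebra Qf :=
  involute.toLinearMap ∘ₗ (reverse (Q := Qf))

/-- The canonical bilinear form `Q̄(x,y) = p(x · c(y))`, where `p` is the scalar-component
projection determined by a monomial basis `bas` (indexed by multi-indices, with
`bas s = e_s`, in particular `bas ∅ = 1`). -/
noncomputable def Qbar {Qf : QuadraticForm F V} {n : ℕ}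
    (bas : Module.Basis (Finset (Fin n)) F (CliffordAlgebra Qf))
    (x y : CliffordAlgebra Qf) : F :=
  bas.coord ∅ (x * cconj Qf y)

/-- The Lie algebra `G = {ξ : c(ξ) = -ξ}` of infinitesimal isometries, as a submodule. -/
noncomputable def Gsub (Qf : QuadraticForm F V) : Submodule F (CliffordAlgebra Qf) :=
  LinearMap.ker (cconj Qf + LinearMap.id)

end Defs

/-!
The monomials `e_I` are `Q̄`-orthonormal: `e_I c(e_I) = 1`, while for `I ≠ J` the product
`e_I e_J` is a multiple of `e_{I ∆ J}` and so has no scalar part. Hence `Q̄(x, x)` is the sum of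
the squares of the coordinates of `x`. As `c(e_I) = (-1)^(k(k+1)/2) e_I` for `k = |I|`, the `e_I`
with `|I| ≡ 1, 2 (mod 4)` form an orthonormal basis of `G`, and since the scalar part is a trace,
`ad ξ` is `Q̄`-skew for `ξ ∈ G`. Therefore `B(ξ, ξ) = tr (ad ξ)² = -∑_I Q̄([ξ, e_I], [ξ, e_I])`.
This is negative as soon as `[ξ, e_i] ≠ 0` for one generator: a monomial `e_I ≠ ω` in `ξ`
anticommutes with some `e_i` (`i ∉ I` if `|I|` is odd, `i ∈ I` if it is even), and the
corresponding coordinate of `e_i [ξ, e_i]` is twice that of `ξ`.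
-/

open scoped symmDiff

lemma even_choose_two_add_self_iff (k : ℕ) :
    Even (k.choose 2 + k) ↔ k % 4 = 0 ∨ k % 4 = 3 := by
  induction k using Nat.strong_induction_on with
  | _ k ih =>
    match k, ih with
    | 0, _ | 1, _ | 2, _ | 3, _ => decide
    | m + 4, ih =>
      have h : (m + 4).choose 2 + (m + 4) = (m.choose 2 + m) + 2 * (2 * m + 5) := by
        simp [Nat.choose_succ_succ']; omega
      rw [h, Nat.even_add, ih m (by omega)]
      simp only [even_two_mul, iff_true]
      omega

lemma neg_one_pow_choose_two_add_self {R : Type*} [Monoid R] [HasDistribNeg R] (k : ℕ) :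
    (-1 : R) ^ (k.choose 2 + k) = if k % 4 = 1 ∨ k % 4 = 2 then -1 else 1 := by
  split_ifs with hk
  · exact Odd.neg_one_pow (Nat.not_even_iff_odd.mp fun h => by
      rw [even_choose_two_add_self_iff] at h; omega)
  · exact Even.neg_one_pow ((even_choose_two_add_self_iff k).mpr (by omega))

lemma Finset.singleton_symmDiff_eq_insert {α : Type*} [DecidableEq α] {a : α} {s : Finset α}
    (h : a ∉ s) : {a} ∆ s = insert a s := by
  ext j; by_cases j = a <;> simp_all [Finset.mem_symmDiff]

lemma Finset.singleton_symmDiff_eq_erase {α : Type*} [DecidableEq α] {a : α} {s : Finset α}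
    (h : a ∈ s) : {a} ∆ s = s.erase a := by
  ext j; by_cases j = a <;> simp_all [Finset.mem_symmDiff]

lemma Module.Basis.repr_apply_eq_mul_of_eigen {ι R M : Type*} [CommSemiring R] [AddCommMonoid M]
    [Module R M] (e : Module.Basis ι R M) {f : M →ₗ[R] M} {μ : ι → R}
    (hf : ∀ i, f (e i) = μ i • e i) (x : M) (i : ι) : e.repr (f x) i = μ i * e.repr x i := by
  classical
  have key : e.coord i ∘ₗ f = μ i • e.coord i := e.ext fun j => by
    by_cases hji : j = i
    · simp [hf, hji]
    · simp [hf, Ne.symm hji]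
  simpa using LinearMap.congr_fun key x

section TraceForm

variable {R M ι : Type*} [CommRing R] [AddCommGroup M] [Module R M] [Fintype ι] [DecidableEq ι]
  {β : LinearMap.BilinForm R M} (e : Module.Basis ι R M)
  (he : ∀ i j, β (e i) (e j) = if i = j then 1 else 0) {T : M →ₗ[R] M}
  (hT : ∀ x y, β (T x) y = -β x (T y))
include he hT

theorem LinearMap.BilinForm.trace_comp_self_eq_neg_sum :
    LinearMap.trace R M (T ∘ₗ T) = -∑ i, β (T (e i)) (T (e i)) := by
  have hrepr : ∀ y i, e.repr y i = β y (e i) := fun y i => by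
    have key : e.coord i = β.flip (e i) := e.ext fun j => by simp [he, Finsupp.single_apply]
    exact LinearMap.congr_fun key y
  rw [LinearMap.trace_eq_matrix_trace R e, Matrix.trace, ← Finset.sum_neg_distrib]
  refine Finset.sum_congr rfl fun i _ => ?_
  rw [Matrix.diag_apply, LinearMap.toMatrix_apply, hrepr, LinearMap.comp_apply, hT]

theorem LinearMap.BilinForm.trace_comp_self_neg [LinearOrder R] [IsStrictOrderedRing R]
    (hpos : ∀ x, x ≠ 0 → 0 < β x x) (hT0 : ∃ i, T (e i) ≠ 0) :
    LinearMap.trace R M (T ∘ₗ T) < 0 := by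
  rw [LinearMap.BilinForm.trace_comp_self_eq_neg_sum e he hT, neg_lt_zero]
  obtain ⟨i, hi⟩ := hT0
  refine Finset.sum_pos' (fun j _ => ?_) ⟨i, Finset.mem_univ _, hpos _ hi⟩
  by_cases hj : T (e j) = 0
  · simp [hj]
  · exact (hpos _ hj).le

end TraceForm

section Monomials

variable {F V : Type*} [Field F] [AddCommGroup V] [Module F V] {Q : QuadraticForm F V} {n : ℕ}
  {b : Module.Basis (Fin n) F V} (hsq : ∀ i, Q (b i) = -1)
  (horth : Pairwise fun i j => Q.IsOrtho (b i) (b j))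

noncomputable def basisWord (Q : QuadraticForm F V) (b : Module.Basis (Fin n) F V)
    (l : List (Fin n)) : CliffordAlgebra Q :=
  (l.map fun i => ι Q (b i)).prod

@[simp] lemma basisWord_nil : basisWord Q b [] = 1 := rfl

@[simp] lemma basisWord_cons (i : Fin n) (l : List (Fin n)) :
    basisWord Q b (i :: l) = ι Q (b i) * basisWord Q b l := by
  simp [basisWord]

@[simp] lemma basisWord_append (l₁ l₂ : List (Fin n)) :
    basisWord Q b (l₁ ++ l₂) = basisWord Q b l₁ * basisWord Q b l₂ := by
  simp [basisWord]

lemma eI_eq_basisWord (s : Finset (Fin n)) : eI Q b s = basisWord Q b (s.sort (· ≤ ·)) := rfl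

@[simp] lemma eI_empty : eI Q b ∅ = 1 := by
  simp [eI_eq_basisWord]

@[simp] lemma eI_singleton (i : Fin n) : eI Q b {i} = ι Q (b i) := by
  simp [eI_eq_basisWord]

lemma cconj_mul (x y : CliffordAlgebra Q) : cconj Q (x * y) = cconj Q y * cconj Q x := by
  simp [cconj]

lemma cconj_ι (v : V) : cconj Q (ι Q v) = -ι Q v := by
  simp [cconj]

lemma cconj_basisWord (l : List (Fin n)) :
    cconj Q (basisWord Q b l) = (-1 : F) ^ l.length • basisWord Q b l.reverse := by
  induction l with
  | nil => simp [cconj]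
  | cons a t ih =>
    rw [basisWord_cons, cconj_mul, ih, cconj_ι, List.reverse_cons, basisWord_append,
      basisWord_cons, basisWord_nil, mul_one, List.length_cons, pow_succ, mul_neg, smul_mul_assoc,
      mul_neg_one, neg_smul]

include hsq in
lemma ι_basis_mul_self (i : Fin n) : ι Q (b i) * ι Q (b i) = -1 := by
  rw [ι_sq_scalar, hsq, map_neg, map_one]

include hsq in
lemma basisWord_mul_reverse (l : List (Fin n)) :
    basisWord Q b l * basisWord Q b l.reverse = (-1 : F) ^ l.length • 1 := by
  induction l with
  | nil => simp
  | cons a t ih =>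
    rw [List.reverse_cons, basisWord_append, basisWord_cons, mul_assoc,
      ← mul_assoc (basisWord Q b t), ih, smul_mul_assoc, one_mul, mul_smul_comm, basisWord_cons,
      basisWord_nil, mul_one, ι_basis_mul_self hsq, List.length_cons, pow_succ, mul_neg_one,
      neg_smul, smul_neg]

include hsq in
lemma eI_mul_cconj_self (s : Finset (Fin n)) : eI Q b s * cconj Q (eI Q b s) = 1 := by
  rw [eI_eq_basisWord, cconj_basisWord, mul_smul_comm, basisWord_mul_reverse hsq, smul_smul,
    ← pow_add, ← two_mul, pow_mul, neg_one_sq, one_pow, one_smul]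

include horth in
lemma basisWord_mul_ι_basis (i : Fin n) (l : List (Fin n)) :
    basisWord Q b l * ι Q (b i) =
      (-1 : F) ^ (l.length + l.count i) • (ι Q (b i) * basisWord Q b l) := by
  induction l with
  | nil => simp
  | cons a t ih =>
    rw [basisWord_cons, mul_assoc, ih, mul_smul_comm, ← mul_assoc, ← mul_assoc]
    by_cases hai : a = i
    · subst hai
      rw [List.count_cons_self, List.length_cons]
      congr 1
      ring
    · rw [ι_mul_ι_comm_of_isOrtho (horth hai), List.count_cons_of_ne hai, List.length_cons,
        neg_mul, smul_neg, ← neg_smul, add_right_comm, pow_succ, mul_neg_one]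

include horth in
lemma basisWord_reverse {l : List (Fin n)} (hl : l.Nodup) :
    basisWord Q b l.reverse = (-1 : F) ^ l.length.choose 2 • basisWord Q b l := by
  induction l with
  | nil => simp
  | cons a t ih =>
    obtain ⟨hat, ht⟩ := List.nodup_cons.1 hl
    rw [List.reverse_cons, basisWord_append, ih ht, basisWord_cons, basisWord_nil, mul_one,
      smul_mul_assoc, basisWord_mul_ι_basis horth, List.count_eq_zero_of_not_mem hat, add_zero,
      smul_smul, ← pow_add, basisWord_cons, List.length_cons, Nat.choose_succ_succ',
      Nat.choose_one_right, add_comm t.length]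

include horth in
lemma basisWord_perm {l₁ l₂ : List (Fin n)} (h : l₁.Perm l₂) :
    ∃ c : F, basisWord Q b l₁ = c • basisWord Q b l₂ := by
  induction h with
  | nil => exact ⟨1, by simp⟩
  | cons x _ ih =>
    obtain ⟨c, hc⟩ := ih
    exact ⟨c, by rw [basisWord_cons, basisWord_cons, hc, mul_smul_comm]⟩
  | swap x y l =>
    by_cases hxy : y = x
    · exact ⟨1, by rw [hxy, one_smul]⟩
    · exact ⟨-1, by simp only [basisWord_cons, ← mul_assoc, ι_mul_ι_comm_of_isOrtho (horth hxy),
        neg_mul, neg_one_smul]⟩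
  | trans _ _ ih₁ ih₂ =>
    obtain ⟨c₁, h₁⟩ := ih₁
    obtain ⟨c₂, h₂⟩ := ih₂
    exact ⟨c₁ * c₂, by rw [h₁, h₂, smul_smul]⟩

include horth in
lemma cconj_eI (s : Finset (Fin n)) :
    cconj Q (eI Q b s) = (-1 : F) ^ (s.card.choose 2 + s.card) • eI Q b s := by
  rw [eI_eq_basisWord, cconj_basisWord, basisWord_reverse horth (Finset.sort_nodup _ _),
    smul_smul, ← pow_add, Finset.length_sort, add_comm]

include hsq horth in
lemma eI_mul_self (s : Finset (Fin n)) :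
    eI Q b s * eI Q b s = (-1 : F) ^ (s.card.choose 2 + s.card) • 1 := by
  have h := eI_mul_cconj_self hsq s
  rw [cconj_eI horth, mul_smul_comm] at h
  rw [← h, smul_smul, ← pow_add, ← two_mul, pow_mul, neg_one_sq, one_pow, one_smul]

include horth in
lemma eI_mul_ι_basis (s : Finset (Fin n)) (i : Fin n) :
    eI Q b s * ι Q (b i) =
      (-1 : F) ^ (s.card + if i ∈ s then 1 else 0) • (ι Q (b i) * eI Q b s) := by
  rw [eI_eq_basisWord, basisWord_mul_ι_basis horth, Finset.length_sort]
  congr 3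
  split_ifs with hi
  · exact List.count_eq_one_of_mem (Finset.sort_nodup _ _) (by simpa using hi)
  · exact List.count_eq_zero_of_not_mem (by simpa using hi)

include hsq horth in
lemma ι_basis_mul_commutator_eI (i : Fin n) (s : Finset (Fin n)) :
    ι Q (b i) * (eI Q b s * ι Q (b i) - ι Q (b i) * eI Q b s) =
      (1 - (-1 : F) ^ (s.card + if i ∈ s then 1 else 0)) • eI Q b s := by
  rw [eI_mul_ι_basis horth, mul_sub, mul_smul_comm, ← mul_assoc, ι_basis_mul_self hsq,
    neg_one_mul]
  module

include horth in
lemma eI_insert {i : Fin n} {s : Finset (Fin n)} (hi : i ∉ s) :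
    ∃ c : F, eI Q b (insert i s) = c • (ι Q (b i) * eI Q b s) := by
  simp only [eI_eq_basisWord, ← basisWord_cons]
  exact basisWord_perm horth <| List.perm_of_nodup_nodup_toFinset_eq (Finset.sort_nodup _ _)
    ((Finset.sort_nodup s _).cons (by simpa using hi)) (by simp)

include hsq horth in
lemma ι_basis_mul_eI (i : Fin n) (s : Finset (Fin n)) :
    ∃ c : F, ι Q (b i) * eI Q b s = c • eI Q b ({i} ∆ s) := by
  by_cases hi : i ∈ s
  · obtain ⟨c, hc⟩ := eI_insert horth (Finset.notMem_erase i s)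
    rw [Finset.insert_erase hi] at hc
    refine ⟨-c, ?_⟩
    rw [hc, mul_smul_comm, ← mul_assoc, ι_basis_mul_self hsq, neg_one_mul, smul_neg,
      Finset.singleton_symmDiff_eq_erase hi, neg_smul]
  · have hl : (i :: s.sort (· ≤ ·)).Nodup := (Finset.sort_nodup s _).cons (by simpa using hi)
    obtain ⟨c, hc⟩ := basisWord_perm (Q := Q) (b := b) horth <|
      List.perm_of_nodup_nodup_toFinset_eq hl (Finset.sort_nodup (insert i s) (· ≤ ·)) (by simp)
    rw [Finset.singleton_symmDiff_eq_insert hi]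
    exact ⟨c, by rw [eI_eq_basisWord, ← basisWord_cons, hc, eI_eq_basisWord]⟩

include hsq horth in
lemma eI_mul_eI (s t : Finset (Fin n)) :
    ∃ c : F, eI Q b s * eI Q b t = c • eI Q b (s ∆ t) := by
  induction s using Finset.induction_on with
  | empty => exact ⟨1, by rw [eI_empty, one_mul, one_smul, ← Finset.bot_eq_empty, bot_symmDiff]⟩
  | @insert i s hi ih =>
    obtain ⟨c₀, h₀⟩ := eI_insert horth (b := b) hi
    obtain ⟨c₁, h₁⟩ := ih
    obtain ⟨c₂, h₂⟩ := ι_basis_mul_eI hsq horth i (s ∆ t)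
    have hst : insert i s ∆ t = {i} ∆ (s ∆ t) := by
      rw [← symmDiff_assoc, Finset.singleton_symmDiff_eq_insert hi]
    refine ⟨c₀ * c₁ * c₂, ?_⟩
    rw [h₀, smul_mul_assoc, mul_assoc, h₁, mul_smul_comm, h₂, smul_smul, smul_smul, hst]

end Monomials

section CanonicalForm

variable {F V : Type*} [Field F] [AddCommGroup V] [Module F V] {Q : QuadraticForm F V} {n : ℕ}
  {b : Module.Basis (Fin n) F V} {bas : Module.Basis (Finset (Fin n)) F (CliffordAlgebra Q)}
  (hsq : ∀ i, Q (b i) = -1) (horth : Pairwise fun i j => Q.IsOrtho (b i) (b j))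
  (hbas : ∀ s, bas s = eI Q b s)

noncomputable def qbarForm (bas : Module.Basis (Finset (Fin n)) F (CliffordAlgebra Q)) :
    LinearMap.BilinForm F (CliffordAlgebra Q) :=
  ((LinearMap.mul F (CliffordAlgebra Q)).compl₂ (cconj Q)).compr₂ (bas.coord ∅)

@[simp] lemma qbarForm_apply (x y : CliffordAlgebra Q) : qbarForm bas x y = Qbar bas x y := rfl

lemma mem_Gsub_iff {x : CliffordAlgebra Q} : x ∈ Gsub Q ↔ cconj Q x = -x := by
  rw [Gsub, LinearMap.mem_ker, LinearMap.add_apply, LinearMap.id_apply, add_eq_zero_iff_eq_neg]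

include hbas in
lemma coord_empty_eI (s : Finset (Fin n)) : bas.coord ∅ (eI Q b s) = if s = ∅ then 1 else 0 := by
  rw [← hbas, Module.Basis.coord_apply, Module.Basis.repr_self, Finsupp.single_apply]

include hsq horth hbas

lemma coord_empty_eI_mul_eI {s t : Finset (Fin n)} (hst : s ≠ t) :
    bas.coord ∅ (eI Q b s * eI Q b t) = 0 := by
  obtain ⟨c, hc⟩ := eI_mul_eI hsq horth s t
  rw [hc, map_smul, coord_empty_eI hbas, if_neg, smul_zero]
  rwa [← Finset.bot_eq_empty, symmDiff_eq_bot]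

lemma coord_empty_mul_comm (x y : CliffordAlgebra Q) :
    bas.coord ∅ (x * y) = bas.coord ∅ (y * x) := by
  have key : (LinearMap.mul F _).compr₂ (bas.coord ∅) =
      ((LinearMap.mul F (CliffordAlgebra Q)).compr₂ (bas.coord ∅)).flip := by
    refine LinearMap.ext_basis bas bas fun s t => ?_
    simp only [LinearMap.compr₂_apply, LinearMap.mul_apply', LinearMap.flip_apply, hbas]
    by_cases hst : s = t
    · rw [hst]
    · rw [coord_empty_eI_mul_eI hsq horth hbas hst,
        coord_empty_eI_mul_eI hsq horth hbas (Ne.symm hst)]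
  exact LinearMap.congr_fun₂ key x y

lemma Qbar_eI_eI (s t : Finset (Fin n)) :
    Qbar bas (eI Q b s) (eI Q b t) = if s = t then 1 else 0 := by
  unfold Qbar
  split_ifs with hst
  · rw [hst, eI_mul_cconj_self hsq, ← eI_empty, coord_empty_eI hbas, if_pos rfl]
  · rw [cconj_eI horth, mul_smul_comm, map_smul, coord_empty_eI_mul_eI hsq horth hbas hst,
      smul_zero]

lemma Qbar_eq_sum (x y : CliffordAlgebra Q) :
    Qbar bas x y = ∑ s, bas.repr x s * bas.repr y s := by
  have key : qbarForm bas = ∑ s, (bas.coord s).smulRight (bas.coord s) :=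
    LinearMap.ext_basis bas bas fun s t => by
      rw [qbarForm_apply, hbas, hbas, Qbar_eI_eI hsq horth hbas, ← hbas, ← hbas]
      simp [Finsupp.single_apply, eq_comm]
  simpa using LinearMap.congr_fun₂ key x y

lemma Qbar_commutator {ξ : CliffordAlgebra Q} (hξ : ξ ∈ Gsub Q) (x y : CliffordAlgebra Q) :
    Qbar bas (ξ * x - x * ξ) y = -Qbar bas x (ξ * y - y * ξ) := by
  have hc : cconj Q (ξ * y - y * ξ) = ξ * cconj Q y - cconj Q y * ξ := by
    rw [map_sub, cconj_mul, cconj_mul, mem_Gsub_iff.mp hξ]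
    noncomm_ring
  unfold Qbar
  rw [hc, sub_mul, mul_sub, map_sub, map_sub, mul_assoc, mul_assoc,
    coord_empty_mul_comm hsq horth hbas ξ, ← mul_assoc x ξ, ← mul_assoc x]
  ring

end CanonicalForm

section OrderedField

variable {F V : Type*} [Field F] [LinearOrder F] [IsStrictOrderedRing F] [AddCommGroup V]
  [Module F V] {Q : QuadraticForm F V} {n : ℕ}
  {b : Module.Basis (Fin n) F V} {bas : Module.Basis (Finset (Fin n)) F (CliffordAlgebra Q)}
  (hsq : ∀ i, Q (b i) = -1) (horth : Pairwise fun i j => Q.IsOrtho (b i) (b j))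
  (hbas : ∀ s, bas s = eI Q b s)

include horth hbas in
lemma mem_Gsub_iff_support {x : CliffordAlgebra Q} :
    x ∈ Gsub Q ↔
      ↑(bas.repr x).support ⊆ {s : Finset (Fin n) | s.card % 4 = 1 ∨ s.card % 4 = 2} := by
  have hc : ∀ s, bas.repr (cconj Q x) s = (-1) ^ (s.card.choose 2 + s.card) * bas.repr x s :=
    bas.repr_apply_eq_mul_of_eigen (fun t => by rw [hbas, cconj_eI horth]) x
  rw [mem_Gsub_iff, ← bas.repr.injective.eq_iff, Finsupp.ext_iff]
  simp only [hc, neg_one_pow_choose_two_add_self, map_neg, Finsupp.neg_apply, Set.subset_def,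
    Finset.mem_coe, Finsupp.mem_support_iff, Set.mem_ofPred_eq]
  refine forall_congr' fun s => ?_
  by_cases hs : s.card % 4 = 1 ∨ s.card % 4 = 2
  · simp [hs]
  · simp [hs, self_eq_neg]

include horth hbas in
lemma exists_basis_Gsub :
    ∃ e : Module.Basis {s : Finset (Fin n) // s.card % 4 = 1 ∨ s.card % 4 = 2} F (Gsub Q),
      ∀ s, (e s : CliffordAlgebra Q) = eI Q b s := by
  let S := {s : Finset (Fin n) // s.card % 4 = 1 ∨ s.card % 4 = 2}
  have hli : LinearIndependent F fun s : S => bas s :=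
    bas.linearIndependent.comp Subtype.val Subtype.val_injective
  have hspan : Submodule.span F (Set.range fun s : S => bas s) = Gsub Q := by
    ext x
    rw [mem_Gsub_iff_support horth hbas, ← bas.mem_span_image, Set.range_comp',
      Subtype.range_coe_subtype]
  exact ⟨(Module.Basis.span hli).map (LinearEquiv.ofEq _ _ hspan), fun s => by
    simp [Module.Basis.span_apply, hbas]⟩

include hsq horth hbas

lemma Qbar_self_pos {x : CliffordAlgebra Q} (hx : x ≠ 0) : 0 < Qbar bas x x := by
  rw [Qbar_eq_sum hsq horth hbas]
  obtain ⟨s, hs⟩ := Finsupp.ne_iff.mp ((LinearEquiv.map_ne_zero_iff bas.repr).mpr hx)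
  exact Finset.sum_pos' (fun s _ => mul_self_nonneg _) ⟨s, Finset.mem_univ _, mul_self_pos.mpr hs⟩

theorem trace_ad_comp_ad_neg (ad : CliffordAlgebra Q → (Gsub Q →ₗ[F] Gsub Q))
    (had : ∀ (ξ : CliffordAlgebra Q) (x : Gsub Q),
      (ad ξ x : CliffordAlgebra Q) = ξ * (x : CliffordAlgebra Q) - (x : CliffordAlgebra Q) * ξ)
    {ξ : CliffordAlgebra Q} (hξ : ξ ∈ Gsub Q) {i : Fin n}
    (hi : ξ * ι Q (b i) - ι Q (b i) * ξ ≠ 0) :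
    LinearMap.trace F (Gsub Q) (ad ξ ∘ₗ ad ξ) < 0 := by
  classical
  obtain ⟨e, he⟩ := exists_basis_Gsub horth hbas
  refine LinearMap.BilinForm.trace_comp_self_neg (β := (qbarForm bas).restrict (Gsub Q)) e
    (fun s t => ?_) (fun x y => ?_) (fun x hx => ?_) ⟨⟨{i}, by simp⟩, ?_⟩
  · simp [he, Qbar_eI_eI hsq horth hbas, Subtype.ext_iff]
  · change Qbar bas (ad ξ x : CliffordAlgebra Q) y = -Qbar bas x (ad ξ y : CliffordAlgebra Q)
    rw [had, had]
    exact Qbar_commutator hsq horth hbas hξ x y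
  · exact Qbar_self_pos hsq horth hbas (by simpa using hx)
  · rw [ne_eq, ← Submodule.coe_eq_zero, had, he, eI_singleton]
    exact hi

lemma exists_commutator_ι_basis_ne_zero {ξ : CliffordAlgebra Q}
    (hξ : ξ ∈ Submodule.span F
      (eI Q b '' {s | (s.card % 4 = 1 ∨ s.card % 4 = 2) ∧ s ≠ Finset.univ}))
    (hξ0 : ξ ≠ 0) : ∃ i, ξ * ι Q (b i) - ι Q (b i) * ξ ≠ 0 := by
  classical
  rw [← funext hbas, bas.mem_span_image] at hξ
  obtain ⟨s, hs⟩ := Finsupp.ne_iff.mp ((LinearEquiv.map_ne_zero_iff bas.repr).mpr hξ0)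
  obtain ⟨hcard, hsu⟩ := hξ (Finsupp.mem_support_iff.mpr hs)
  -- `e_i` anticommutes with `e_s` exactly when `|s| + [i ∈ s]` is odd.
  obtain ⟨i, hodd⟩ : ∃ i, Odd (s.card + if i ∈ s then 1 else 0) := by
    rcases hcard with h | h
    · obtain ⟨i, hi⟩ : ∃ i, i ∉ s := by simpa [Finset.eq_univ_iff_forall] using hsu
      exact ⟨i, by rw [if_neg hi]; exact Nat.odd_iff.mpr (by omega)⟩
    · obtain ⟨i, hi⟩ := Finset.card_pos.mp (by omega : 0 < s.card)
      exact ⟨i, by rw [if_pos hi]; exact Nat.odd_iff.mpr (by omega)⟩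
  refine ⟨i, fun h => hs ?_⟩
  let f := LinearMap.mulLeft F (ι Q (b i)) ∘ₗ
    (LinearMap.mulRight F (ι Q (b i)) - LinearMap.mulLeft F (ι Q (b i)))
  have hf := bas.repr_apply_eq_mul_of_eigen (f := f) (fun t => by
    simpa [f, hbas] using ι_basis_mul_commutator_eI hsq horth i t) ξ s
  have hfξ : f ξ = 0 := by simp [f, h]
  rw [hfξ, hodd.neg_one_pow, map_zero, Finsupp.zero_apply, sub_neg_eq_add, one_add_one_eq_two] at hf
  exact (mul_eq_zero.mp hf.symm).resolve_left two_ne_zero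

end OrderedField

theorem stmt19_general {n : ℕ}
    (B : LinearMap.BilinForm ℝ (Fin n → ℝ))
    (Qf : QuadraticForm ℝ (Fin n → ℝ)) (hQ : ∀ v, Qf v = -(B v v))
    (b : Module.Basis (Fin n) ℝ (Fin n → ℝ))
    (hb : ∀ i j : Fin n, B (b i) (b j) = if i = j then 1 else 0)
    (bas : Module.Basis (Finset (Fin n)) ℝ (CliffordAlgebra Qf))
    (hbas : ∀ s : Finset (Fin n), bas s = eI Qf b s)
    (ad : CliffordAlgebra Qf → (Gsub Qf →ₗ[ℝ] Gsub Qf))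
    (had : ∀ (ξ : CliffordAlgebra Qf) (x : Gsub Qf),
      ((ad ξ x : CliffordAlgebra Qf)) = ξ * (x : CliffordAlgebra Qf) - (x : CliffordAlgebra Qf) * ξ) :
    (∀ s : Finset (Fin n), (s.card % 4 = 1 ∨ s.card % 4 = 2) → s ≠ Finset.univ →
      eI Qf b s * eI Qf b s = -1 ∧ Qbar bas (eI Qf b s) (eI Qf b s) = 1) ∧
    (∀ ξ ∈ Submodule.span ℝ
        (eI Qf b '' {s : Finset (Fin n) | (s.card % 4 = 1 ∨ s.card % 4 = 2) ∧ s ≠ Finset.univ}),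
      ξ ≠ 0 → LinearMap.trace ℝ (Gsub Qf) (ad ξ ∘ₗ ad ξ) < 0) ∧
    (∀ ξ ∈ Submodule.span ℝ
        (eI Qf b '' {s : Finset (Fin n) | (s.card % 4 = 1 ∨ s.card % 4 = 2) ∧ s ≠ Finset.univ}),
      ξ ≠ 0 → 0 < Qbar bas ξ ξ) := by
  have hsq : ∀ i, Qf (b i) = -1 := fun i => by rw [hQ, hb, if_pos rfl]
  have horth : Pairwise fun i j => Qf.IsOrtho (b i) (b j) := fun i j hij => by
    simp [QuadraticMap.isOrtho_def, hQ, hb, hij, hij.symm]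
  refine ⟨fun s hs _ => ⟨?_, ?_⟩, fun ξ hξ hξ0 => ?_,
    fun ξ _ hξ0 => Qbar_self_pos hsq horth hbas hξ0⟩
  · rw [eI_mul_self hsq horth, neg_one_pow_choose_two_add_self, if_pos hs, neg_one_smul]
  · rw [Qbar_eI_eI hsq horth hbas, if_pos rfl]
  · have hξG : ξ ∈ Gsub Qf := by
      refine (mem_Gsub_iff_support horth hbas).mpr fun s hs => ?_
      rw [← funext hbas, bas.mem_span_image] at hξ
      exact (hξ hs).1
    obtain ⟨i, hi⟩ := exists_commutator_ι_basis_ne_zero hsq horth hbas hξ hξ0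
    exact trace_ad_comp_ad_neg hsq horth hbas ad had hξG hi

theorem stmt19 {n : ℕ}
    (B : LinearMap.BilinForm ℝ (Fin n → ℝ))
    (hB : ∀ v w : Fin n → ℝ, B v w = ∑ i, v i * w i)
    (Qf : QuadraticForm ℝ (Fin n → ℝ)) (hQ : ∀ v, Qf v = -(B v v))
    (b : Module.Basis (Fin n) ℝ (Fin n → ℝ))
    (hb : ∀ i j : Fin n, B (b i) (b j) = if i = j then 1 else 0)
    (bas : Module.Basis (Finset (Fin n)) ℝ (CliffordAlgebra Qf))
    (hbas : ∀ s : Finset (Fin n), bas s = eI Qf b s)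
    (ad : CliffordAlgebra Qf → (Gsub Qf →ₗ[ℝ] Gsub Qf))
    (had : ∀ (ξ : CliffordAlgebra Qf) (x : Gsub Qf),
      ((ad ξ x : CliffordAlgebra Qf)) = ξ * (x : CliffordAlgebra Qf) - (x : CliffordAlgebra Qf) * ξ) :
    (∀ s : Finset (Fin n), (s.card % 4 = 1 ∨ s.card % 4 = 2) → s ≠ Finset.univ →
      eI Qf b s * eI Qf b s = -1 ∧ Qbar bas (eI Qf b s) (eI Qf b s) = 1) ∧
    (∀ ξ ∈ Submodule.span ℝ
        (eI Qf b '' {s : Finset (Fin n) | (s.card % 4 = 1 ∨ s.card % 4 = 2) ∧ s ≠ Finset.univ}),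
      ξ ≠ 0 → LinearMap.trace ℝ (Gsub Qf) (ad ξ ∘ₗ ad ξ) < 0) ∧
    (∀ ξ ∈ Submodule.span ℝ
        (eI Qf b '' {s : Finset (Fin n) | (s.card % 4 = 1 ∨ s.card % 4 = 2) ∧ s ≠ Finset.univ}),
      ξ ≠ 0 → 0 < Qbar bas ξ ξ) :=
  stmt19_general B Qf hQ b hb bas hbas ad had
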